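/- Let H_m(e) denote the number of acyclic digraphs with vertex set {1,…,m} and exactly e edges, and let Y_m(t) = ∑_e H_m(e) t^e (with Y_0(t) = 1). Then for every n ≥ 1, the polynomial identity ∑_{j=0}^{n} (−1)^j · C(n,j) · (1+t)^{j(n−j)} · Y_{n−j}(t) = 0 holds in ℤ[t], where C(n,j) is the binomial coefficient. -/
import Mathlib


/-- An edge set `E` on vertex set `Fin n` contains a directed cycle if there are `j ≥ 2`
distinct vertices `k 0, …, k (j-1)` with all consecutive (cyclic) pairs being edges. -/
def HasDicycle {n : ℕ} (E : Finset (Fin n × Fin n)) : Prop :=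
  ∃ j : ℕ, 2 ≤ j ∧ ∃ k : ZMod j → Fin n, Function.Injective k ∧
    ∀ a : ZMod j, (k a, k (a + 1)) ∈ E

/-- An acyclic digraph on `Fin n`: a set of ordered pairs with distinct components
(no loops), containing no directed cycle. -/
def IsAcyclicDigraph {n : ℕ} (E : Finset (Fin n × Fin n)) : Prop :=
  (∀ e ∈ E, e.1 ≠ e.2) ∧ ¬ HasDicycle E

/-- `H m e`: the number of acyclic digraphs with vertex set `{1, …, m}` and exactly
`e` edges. -/
noncomputable def acyclicDigraphCount (m e : ℕ) : ℕ :=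
  Nat.card {E : Finset (Fin m × Fin m) // IsAcyclicDigraph E ∧ E.card = e}

/-- `Y m = ∑_e H_m(e) tᵉ ∈ ℤ[t]`, the polynomial counting acyclic digraphs on
`{1, …, m}` by number of edges.  (An acyclic digraph on `m` vertices has at most `m²`
edges, so the sum below captures all nonzero terms; `Y 0 = 1`.) -/
noncomputable def acyclicGenPoly (m : ℕ) : Polynomial ℤ :=
  ∑ e ∈ Finset.range (m * m + 1),
    Polynomial.C ((acyclicDigraphCount m e : ℤ)) * Polynomial.X ^ e

theorem exists_source {n : ℕ} (hn : 0 < n) (E : Finset (Fin n × Fin n))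
    (hE : IsAcyclicDigraph E) : ∃ v : Fin n, ∀ e ∈ E, e.2 ≠ v := by
  by_contra hcon
  push_neg at hcon
  choose g hg1 hg2 using hcon
  set f : Fin n → Fin n := fun v => (g v).1 with hfdef
  have hf : ∀ v, (f v, v) ∈ E := by
    intro v
    have h := hg1 v
    have he : (f v, v) = g v := Prod.ext_iff.mpr ⟨rfl, (hg2 v).symm⟩
    rwa [he]
  -- pigeonhole: some iterate repeats
  obtain ⟨a, b, hab, heq⟩ := Fintype.exists_ne_map_eq_of_card_lt
    (fun i : Fin (n+1) => f^[i.val] (⟨0, hn⟩ : Fin n)) (by simp)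
  wlog hlt : a.val < b.val generalizing a b
  · exact this b a hab.symm heq.symm (by have := Fin.val_ne_of_ne hab; omega)
  set x : Fin n := f^[a.val] (⟨0, hn⟩ : Fin n) with hx
  have hper : Function.IsPeriodicPt f (b.val - a.val) x := by
    unfold Function.IsPeriodicPt Function.IsFixedPt
    rw [hx, ← Function.iterate_add_apply]
    rw [show b.val - a.val + a.val = b.val by omega]
    exact heq.symm
  set m := Function.minimalPeriod f x with hm
  have hm0 : 0 < m := hper.minimalPeriod_pos (by omega)
  have hmx : f^[m] x = x := Function.isPeriodicPt_minimalPeriod f x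
  have hm1 : m ≠ 1 := by
    intro h1
    have : f x = x := by rw [h1] at hmx; simpa using hmx
    exact hE.1 (f x, x) (hf x) (by rw [this])
  have hm2 : 2 ≤ m := by omega
  haveI : NeZero m := ⟨by omega⟩
  apply hE.2
  refine ⟨m, hm2, fun a => f^[m - 1 - a.val] x, ?_, ?_⟩
  · intro a b hab2
    have ha : a.val < m := ZMod.val_lt a
    have hb : b.val < m := ZMod.val_lt b
    have := Function.iterate_injOn_Iio_minimalPeriod (f := f) (x := x)
      (by simp [hm]; omega : m - 1 - a.val ∈ Set.Iio m)
      (by simp [hm]; omega : m - 1 - b.val ∈ Set.Iio m) hab2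
    have : a.val = b.val := by omega
    exact ZMod.val_injective m this
  · intro a
    have ha : a.val < m := ZMod.val_lt a
    haveI : Fact (1 < m) := ⟨by omega⟩
    have hv1 : (1 : ZMod m).val = 1 := ZMod.val_one m
    have hva : (a + 1).val = (a.val + 1) % m := by rw [ZMod.val_add, hv1]
    have key : f^[m - 1 - a.val] x = f (f^[m - 1 - (a+1).val] x) := by
      rcases Nat.lt_or_ge a.val (m - 1) with h | h
      · rw [hva, Nat.mod_eq_of_lt (by omega)]
        rw [← Function.iterate_succ_apply' f]
        congr 1; omega
      · have hav : a.val = m - 1 := by omega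
        rw [hva, hav, show (m - 1 + 1) % m = 0 by rw [Nat.sub_add_cancel (by omega)]; exact Nat.mod_self m]
        simp only [Nat.sub_zero, hav, Nat.sub_self]
        rw [← Function.iterate_succ_apply' f]
        rw [show (m-1).succ = m by omega, hmx]
        simp
    show (f^[m - 1 - a.val] x, f^[m - 1 - (a+1).val] x) ∈ E
    rw [key]
    exact hf _

open scoped Classical

theorem genPoly_eq (m : ℕ) :
    acyclicGenPoly m
      = ∑ E ∈ Finset.univ.filter (fun E : Finset (Fin m × Fin m) => IsAcyclicDigraph E),
          (Polynomial.X : Polynomial ℤ) ^ E.card := by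
  rw [acyclicGenPoly]
  rw [← Finset.sum_fiberwise_of_maps_to (g := fun E : Finset (Fin m × Fin m) => E.card)
      (fun E _ => by
        have h : E.card ≤ Fintype.card (Fin m × Fin m) := Finset.card_le_univ E
        simp only [Fintype.card_prod, Fintype.card_fin] at h
        exact Finset.mem_range.mpr (Nat.lt_succ_of_le h))]
  apply Finset.sum_congr rfl
  intro e _
  have hcount : acyclicDigraphCount m e
      = ((Finset.univ.filter (fun E : Finset (Fin m × Fin m) => IsAcyclicDigraph E)).filter
          (fun E => E.card = e)).card := by
    rw [acyclicDigraphCount, Nat.card_eq_fintype_card, Fintype.card_subtype,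
      Finset.filter_filter]
  have hsum : ∑ E ∈ (Finset.univ.filter
        (fun E : Finset (Fin m × Fin m) => IsAcyclicDigraph E)).filter (fun E => E.card = e),
        (Polynomial.X : Polynomial ℤ) ^ E.card
      = ∑ _E ∈ (Finset.univ.filter
        (fun E : Finset (Fin m × Fin m) => IsAcyclicDigraph E)).filter (fun E => E.card = e),
        (Polynomial.X : Polynomial ℤ) ^ e := by
    apply Finset.sum_congr rfl
    intro E hE
    rw [(Finset.mem_filter.mp hE).2]
  rw [hsum, Finset.sum_const, hcount, nsmul_eq_mul]
  simp

theorem sum_B (n : ℕ) (S : Finset (Fin n)) :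
    ∑ E ∈ Finset.univ.filter (fun E : Finset (Fin n × Fin n) =>
        IsAcyclicDigraph E ∧ ∀ e ∈ E, e.2 ∉ S),
      (Polynomial.X : Polynomial ℤ) ^ E.card
    = (1 + Polynomial.X) ^ (S.card * (n - S.card)) * acyclicGenPoly (n - S.card) := by
  set m := n - S.card with hmdef
  have hSc : Sᶜ.card = m := by
    rw [Finset.card_compl, hmdef]
    simp
  set ι : Fin m ≃o {x // x ∈ Sᶜ} := Sᶜ.orderIsoOfFin hSc with hι
  set emb : Fin m → Fin n := fun i => (ι i : Fin n) with hembdef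
  have hemb_inj : Function.Injective emb := fun a b h => ι.injective (Subtype.ext h)
  have hemb_mem : ∀ i, emb i ∈ Sᶜ := fun i => (ι i).2
  have hemb_surj : ∀ v ∈ Sᶜ, ∃ i, emb i = v := fun v hv =>
    ⟨ι.symm ⟨v, hv⟩, by simp [hembdef]⟩
  set pe : Fin m × Fin m ↪ Fin n × Fin n :=
    (⟨emb, hemb_inj⟩ : Fin m ↪ Fin n).prodMap ⟨emb, hemb_inj⟩ with hpedef
  have hpe : ∀ q : Fin m × Fin m, pe q = (emb q.1, emb q.2) := fun q => rfl
  -- source/target facts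
  have hsrcF : ∀ F ∈ (S ×ˢ Sᶜ).powerset, ∀ e ∈ F, e.1 ∈ S ∧ e.2 ∈ Sᶜ := by
    intro F hF e he
    have := Finset.mem_powerset.mp hF he
    exact Finset.mem_product.mp this
  have hsrcMap : ∀ (G : Finset (Fin m × Fin m)), ∀ e ∈ G.map pe, e.1 ∈ Sᶜ ∧ e.2 ∈ Sᶜ := by
    intro G e he
    obtain ⟨g, _, rfl⟩ := Finset.mem_map.mp he
    rw [hpe]
    exact ⟨hemb_mem _, hemb_mem _⟩
  -- the key image identity
  have himage : Finset.univ.filter (fun E : Finset (Fin n × Fin n) =>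
        IsAcyclicDigraph E ∧ ∀ e ∈ E, e.2 ∉ S)
      = ((S ×ˢ Sᶜ).powerset ×ˢ
          (Finset.univ.filter (fun G : Finset (Fin m × Fin m) => IsAcyclicDigraph G))).image
          (fun p => p.1 ∪ p.2.map pe) := by
    ext E
    simp only [Finset.mem_filter, Finset.mem_univ, true_and, Finset.mem_image,
      Finset.mem_product]
    constructor
    · rintro ⟨hEac, hEt⟩
      set F := E.filter (fun e => e.1 ∈ S) with hFdef
      set E₂ := E.filter (fun e => e.1 ∉ S) with hE₂def
      have hE₂mem : ∀ e ∈ E₂, e.1 ∈ Sᶜ ∧ e.2 ∈ Sᶜ := by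
        intro e he
        obtain ⟨heE, h1⟩ := Finset.mem_filter.mp he
        exact ⟨Finset.mem_compl.mpr h1, Finset.mem_compl.mpr (hEt e heE)⟩
      have hrange : ∀ e ∈ E₂, e ∈ Set.range pe := by
        intro e he
        obtain ⟨h1, h2⟩ := hE₂mem e he
        obtain ⟨a, ha⟩ := hemb_surj e.1 h1
        obtain ⟨b, hb⟩ := hemb_surj e.2 h2
        exact ⟨(a, b), by rw [hpe]; exact Prod.ext_iff.mpr ⟨ha, hb⟩⟩
      set G := E₂.preimage pe pe.injective.injOn with hGdef
      have hmapG : G.map pe = E₂ := by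
        rw [Finset.map_eq_image, hGdef, Finset.image_preimage]
        exact Finset.filter_true_of_mem hrange
      have hGmem : ∀ q : Fin m × Fin m, q ∈ G ↔ pe q ∈ E₂ := by
        intro q; rw [hGdef, Finset.mem_preimage]
      refine ⟨(F, G), ⟨?_, ?_⟩, ?_⟩
      · rw [Finset.mem_powerset]
        intro e he
        obtain ⟨heE, h1⟩ := Finset.mem_filter.mp he
        exact Finset.mem_product.mpr ⟨h1, Finset.mem_compl.mpr (hEt e heE)⟩
      · constructor
        · intro g hg hgeq
          have := (hGmem g).mp hg
          have hE : pe g ∈ E := Finset.filter_subset _ _ this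
          exact hEac.1 (pe g) hE (by rw [hpe]; simp only []; exact congrArg emb hgeq)
        · rintro ⟨j, hj, k', hinj, hk⟩
          apply hEac.2
          refine ⟨j, hj, fun a => emb (k' a), hemb_inj.comp hinj, ?_⟩
          intro a
          have := (hGmem (k' a, k' (a+1))).mp (hk a)
          have h2 : pe (k' a, k' (a+1)) ∈ E := Finset.filter_subset _ _ this
          rwa [hpe] at h2
      · show F ∪ G.map pe = E
        rw [hmapG, hFdef, hE₂def]
        exact Finset.filter_union_filter_not_eq _ E
    · rintro ⟨⟨F, G⟩, ⟨hF, hG⟩, rfl⟩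
      simp only at *
      have hGac := hG
      have htgt : ∀ e ∈ F ∪ G.map pe, e.2 ∈ Sᶜ := by
        intro e he
        rcases Finset.mem_union.mp he with h | h
        · exact (hsrcF F hF e h).2
        · exact (hsrcMap G e h).2
      constructor
      · constructor
        · intro e he
          rcases Finset.mem_union.mp he with h | h
          · obtain ⟨h1, h2⟩ := hsrcF F hF e h
            intro heq
            rw [heq] at h1
            exact Finset.mem_compl.mp h2 h1
          · obtain ⟨g, hgG, rfl⟩ := Finset.mem_map.mp h
            rw [hpe]
            intro heq
            exact hGac.1 g hgG (hemb_inj heq)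
        · rintro ⟨j, hj, k, hkinj, hk⟩
          have hkSc : ∀ a : ZMod j, k a ∈ Sᶜ := by
            intro a
            have h := htgt _ (hk (a - 1))
            simpa [sub_add_cancel] using h
          have hedge : ∀ a : ZMod j, (k a, k (a+1)) ∈ G.map pe := by
            intro a
            rcases Finset.mem_union.mp (hk a) with h | h
            · exact absurd (hsrcF F hF _ h).1 (Finset.mem_compl.mp (hkSc a))
            · exact h
          apply hGac.2
          set k' : ZMod j → Fin m := fun a => ι.symm ⟨k a, hkSc a⟩ with hk'def
          have hembk' : ∀ a, emb (k' a) = k a := by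
            intro a
            show ((ι (ι.symm ⟨k a, hkSc a⟩) : {x // x ∈ Sᶜ}) : Fin n) = k a
            rw [OrderIso.apply_symm_apply]
          refine ⟨j, hj, k', ?_, ?_⟩
          · intro a b hab
            apply hkinj
            rw [← hembk' a, ← hembk' b, hab]
          · intro a
            obtain ⟨g, hgG, hgeq⟩ := Finset.mem_map.mp (hedge a)
            rw [hpe] at hgeq
            have h1 : g.1 = k' a := hemb_inj (by
              rw [hembk']
              exact congrArg Prod.fst hgeq)
            have h2 : g.2 = k' (a+1) := hemb_inj (by
              rw [hembk']
              exact congrArg Prod.snd hgeq)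
            rw [← h1, ← h2]
            exact hgG
      · intro e he
        exact Finset.mem_compl.mp (htgt e he)
  -- injectivity of the gluing map
  have hinjOn : ∀ p ∈ (S ×ˢ Sᶜ).powerset ×ˢ
        (Finset.univ.filter (fun G : Finset (Fin m × Fin m) => IsAcyclicDigraph G)),
      ∀ q ∈ (S ×ˢ Sᶜ).powerset ×ˢ
        (Finset.univ.filter (fun G : Finset (Fin m × Fin m) => IsAcyclicDigraph G)),
      (fun p : Finset (Fin n × Fin n) × Finset (Fin m × Fin m) => p.1 ∪ p.2.map pe) p =
        (fun p : Finset (Fin n × Fin n) × Finset (Fin m × Fin m) => p.1 ∪ p.2.map pe) q →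
      p = q := by
    have key : ∀ p ∈ (S ×ˢ Sᶜ).powerset ×ˢ
        (Finset.univ.filter (fun G : Finset (Fin m × Fin m) => IsAcyclicDigraph G)),
        (p.1 ∪ p.2.map pe).filter (fun e => e.1 ∈ S) = p.1 ∧
        (p.1 ∪ p.2.map pe).filter (fun e => e.1 ∉ S) = p.2.map pe := by
      rintro ⟨F, G⟩ hp
      have hF := (Finset.mem_product.mp hp).1
      constructor
      · show (F ∪ G.map pe).filter (fun e => e.1 ∈ S) = F
        rw [Finset.filter_union,
          Finset.filter_true_of_mem (fun e he => (hsrcF F hF e he).1),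
          Finset.filter_false_of_mem
            (fun e he => Finset.mem_compl.mp (hsrcMap G e he).1),
          Finset.union_empty]
      · show (F ∪ G.map pe).filter (fun e => e.1 ∉ S) = G.map pe
        rw [Finset.filter_union,
          Finset.filter_false_of_mem (fun e he => not_not_intro (hsrcF F hF e he).1),
          Finset.filter_true_of_mem
            (fun e he => Finset.mem_compl.mp (hsrcMap G e he).1),
          Finset.empty_union]
    intro p hp q hq heq
    simp only at heq
    obtain ⟨hp1, hp2⟩ := key p hp
    obtain ⟨hq1, hq2⟩ := key q hq
    have h1 : p.1 = q.1 := by rw [← hp1, ← hq1, heq]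
    have h2 : p.2.map pe = q.2.map pe := by rw [← hp2, ← hq2, heq]
    exact Prod.ext_iff.mpr ⟨h1, Finset.map_injective pe h2⟩
  -- the card identity
  have hcard : ∀ p ∈ (S ×ˢ Sᶜ).powerset ×ˢ
        (Finset.univ.filter (fun G : Finset (Fin m × Fin m) => IsAcyclicDigraph G)),
      (p.1 ∪ p.2.map pe).card = p.1.card + p.2.card := by
    rintro ⟨F, G⟩ hp
    have hF := (Finset.mem_product.mp hp).1
    have hdisj : Disjoint F (G.map pe) := by
      rw [Finset.disjoint_left]
      intro e heF heM
      exact Finset.mem_compl.mp (hsrcMap G e heM).1 (hsrcF F hF e heF).1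
    rw [Finset.card_union_of_disjoint hdisj, Finset.card_map]
  rw [himage, Finset.sum_image hinjOn]
  have : ∀ p ∈ (S ×ˢ Sᶜ).powerset ×ˢ
        (Finset.univ.filter (fun G : Finset (Fin m × Fin m) => IsAcyclicDigraph G)),
      (Polynomial.X : Polynomial ℤ) ^ (p.1 ∪ p.2.map pe).card
        = Polynomial.X ^ p.1.card * Polynomial.X ^ p.2.card := by
    intro p hp
    rw [hcard p hp, pow_add]
  rw [Finset.sum_congr rfl this, Finset.sum_product]
  have hfactor : ∑ F ∈ (S ×ˢ Sᶜ).powerset,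
      ∑ G ∈ Finset.univ.filter (fun G : Finset (Fin m × Fin m) => IsAcyclicDigraph G),
        (Polynomial.X : Polynomial ℤ) ^ F.card * Polynomial.X ^ G.card
      = (∑ F ∈ (S ×ˢ Sᶜ).powerset, (Polynomial.X : Polynomial ℤ) ^ F.card) *
        (∑ G ∈ Finset.univ.filter (fun G : Finset (Fin m × Fin m) => IsAcyclicDigraph G),
          (Polynomial.X : Polynomial ℤ) ^ G.card) := by
    rw [Finset.sum_mul_sum]
  rw [hfactor, ← genPoly_eq]
  have hpow : ∑ F ∈ (S ×ˢ Sᶜ).powerset, (Polynomial.X : Polynomial ℤ) ^ F.card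
      = (1 + Polynomial.X) ^ (S.card * (n - S.card)) := by
    have h := Finset.prod_add (fun _ : Fin n × Fin n => (Polynomial.X : Polynomial ℤ))
      (fun _ => (1 : Polynomial ℤ)) (S ×ˢ Sᶜ)
    simp only [Finset.prod_const, mul_one, one_pow, Finset.prod_const_one] at h
    rw [← h, Finset.card_product, hSc, add_comm]
  rw [hpow]

theorem sum_A (n : ℕ) (hn : 1 ≤ n) :
    ∑ S ∈ (Finset.univ : Finset (Fin n)).powerset,
      (-1 : Polynomial ℤ) ^ S.card *
        ∑ E ∈ Finset.univ.filter (fun E : Finset (Fin n × Fin n) =>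
            IsAcyclicDigraph E ∧ ∀ e ∈ E, e.2 ∉ S),
          (Polynomial.X : Polynomial ℤ) ^ E.card = 0 := by
  have hrw : ∀ S : Finset (Fin n),
      (-1 : Polynomial ℤ) ^ S.card *
        ∑ E ∈ Finset.univ.filter (fun E : Finset (Fin n × Fin n) =>
            IsAcyclicDigraph E ∧ ∀ e ∈ E, e.2 ∉ S),
          (Polynomial.X : Polynomial ℤ) ^ E.card
      = ∑ E ∈ Finset.univ.filter (fun E : Finset (Fin n × Fin n) => IsAcyclicDigraph E),
          (if ∀ e ∈ E, e.2 ∉ S then (-1 : Polynomial ℤ) ^ S.card * Polynomial.X ^ E.card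
            else 0) := by
    intro S
    rw [Finset.mul_sum, ← Finset.sum_filter, Finset.filter_filter]
  rw [Finset.sum_congr rfl (fun S _ => hrw S), Finset.sum_comm]
  apply Finset.sum_eq_zero
  intro E hE
  have hEac : IsAcyclicDigraph E := (Finset.mem_filter.mp hE).2
  set T : Finset (Fin n) := Finset.univ.filter (fun v => ∀ e ∈ E, e.2 ≠ v) with hT
  have hcond : ∀ S : Finset (Fin n), (∀ e ∈ E, e.2 ∉ S) ↔ S ⊆ T := by
    intro S
    constructor
    · intro h v hv
      rw [hT, Finset.mem_filter]
      exact ⟨Finset.mem_univ v, fun e he heq => h e he (heq ▸ hv)⟩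
    · intro h e he hmem
      exact (Finset.mem_filter.mp (h hmem)).2 e he rfl
  have hstep : ∑ S ∈ (Finset.univ : Finset (Fin n)).powerset,
      (if ∀ e ∈ E, e.2 ∉ S then (-1 : Polynomial ℤ) ^ S.card * Polynomial.X ^ E.card
        else 0)
      = ∑ S ∈ T.powerset, (-1 : Polynomial ℤ) ^ S.card * Polynomial.X ^ E.card := by
    rw [← Finset.sum_filter]
    apply Finset.sum_congr _ (fun _ _ => rfl)
    ext S
    simp only [Finset.mem_filter, Finset.mem_powerset, Finset.subset_univ, true_and]
    exact hcond S
  have hTne : T ≠ ∅ := by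
    obtain ⟨v, hv⟩ := exists_source hn E hEac
    intro hTe
    have : v ∈ T := Finset.mem_filter.mpr ⟨Finset.mem_univ v, fun e he => hv e he⟩
    rw [hTe] at this
    exact absurd this (Finset.notMem_empty v)
  have hzero : ∑ S ∈ T.powerset, (-1 : Polynomial ℤ) ^ S.card = 0 := by
    have h := Finset.sum_powerset_neg_one_pow_card (x := T)
    rw [if_neg hTne] at h
    calc ∑ S ∈ T.powerset, (-1 : Polynomial ℤ) ^ S.card
        = ((∑ S ∈ T.powerset, (-1 : ℤ) ^ S.card : ℤ) : Polynomial ℤ) := by push_cast; rfl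
      _ = 0 := by rw [h]; simp
  rw [hstep, ← Finset.sum_mul, hzero, zero_mul]

/-- For every `n ≥ 1`, the identity
`∑_{j=0}^{n} (−1)ʲ C(n,j) (1+t)^{j(n−j)} Y_{n−j}(t) = 0` holds in `ℤ[t]`. -/
theorem acyclic_gen_poly_alternating_sum
    (n : ℕ) (hn : 1 ≤ n) :
    ∑ j ∈ Finset.range (n + 1),
        (-1 : Polynomial ℤ) ^ j * (n.choose j : Polynomial ℤ) *
          (1 + Polynomial.X) ^ (j * (n - j)) * acyclicGenPoly (n - j) = 0 := by
  have h1 : ∑ S ∈ (Finset.univ : Finset (Fin n)).powerset,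
      (-1 : Polynomial ℤ) ^ S.card *
        ((1 + Polynomial.X) ^ (S.card * (n - S.card)) * acyclicGenPoly (n - S.card)) = 0 := by
    calc ∑ S ∈ (Finset.univ : Finset (Fin n)).powerset,
        (-1 : Polynomial ℤ) ^ S.card *
          ((1 + Polynomial.X) ^ (S.card * (n - S.card)) * acyclicGenPoly (n - S.card))
        = ∑ S ∈ (Finset.univ : Finset (Fin n)).powerset,
          (-1 : Polynomial ℤ) ^ S.card *
            ∑ E ∈ Finset.univ.filter (fun E : Finset (Fin n × Fin n) =>
                IsAcyclicDigraph E ∧ ∀ e ∈ E, e.2 ∉ S),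
              (Polynomial.X : Polynomial ℤ) ^ E.card :=
          Finset.sum_congr rfl (fun S _ => by rw [sum_B n S])
      _ = 0 := sum_A n hn
  rw [Finset.sum_powerset] at h1
  have hcard : (Finset.univ : Finset (Fin n)).card = n := by simp
  rw [hcard] at h1
  rw [← h1]
  apply Finset.sum_congr rfl
  intro j hj
  have hconst : ∀ S ∈ Finset.powersetCard j (Finset.univ : Finset (Fin n)),
      (-1 : Polynomial ℤ) ^ S.card *
        ((1 + Polynomial.X) ^ (S.card * (n - S.card)) * acyclicGenPoly (n - S.card))
      = (-1 : Polynomial ℤ) ^ j *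
        ((1 + Polynomial.X) ^ (j * (n - j)) * acyclicGenPoly (n - j)) := by
    intro S hS
    rw [(Finset.mem_powersetCard.mp hS).2]
  rw [Finset.sum_congr rfl hconst, Finset.sum_const, Finset.card_powersetCard, hcard,
    nsmul_eq_mul]
  ring
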